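/- Let E ⊂ ℝ be a Lebesgue measurable set with positive measure and let ℓ be a point of density 1 of E with ℓ > 0. Then for every q ∈ (0,1) there exists a strictly increasing sequence (ℓ_n)_{n≥1} in (0, ℓ) with lim_{n→∞} ℓ_n = ℓ, such that ℓ_{n+2} − ℓ_{n+1} = q·(ℓ_{n+1} − ℓ_n) for all n ≥ 1 and |E ∩ (ℓ_n, ℓ_{n+1})| ≥ (ℓ_{n+1} − ℓ_n)/3 for all n ≥ 1. -/
import Mathlib


open MeasureTheory Filter Set

theorem stmt5 (E : Set ℝ) (hE : MeasurableSet E) (hpos : 0 < volume E)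
    (ℓ : ℝ) (hℓ : 0 < ℓ)
    (hdens : Tendsto (fun r : ℝ => volume (E ∩ Ioo (ℓ - r) (ℓ + r)) / ENNReal.ofReal (2 * r))
      (nhdsWithin 0 (Ioi 0)) (nhds 1)) :
    ∀ q : ℝ, q ∈ Ioo (0:ℝ) 1 →
      ∃ l : ℕ → ℝ, StrictMono l ∧ (∀ n, l n ∈ Ioo 0 ℓ) ∧
        Tendsto l atTop (nhds ℓ) ∧
        (∀ n, l (n + 2) - l (n + 1) = q * (l (n + 1) - l n)) ∧
        (∀ n, (volume (E ∩ Ioo (l n) (l (n + 1)))).toReal ≥ (l (n + 1) - l n) / 3) := by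
  intro q hq
  obtain ⟨hq0, hq1⟩ := hq
  set ε : ℝ := (1 - q) / 3 with hεdef
  have hε0 : 0 < ε := by simp only [hεdef]; linarith
  have h1 : ENNReal.ofReal (1 - ε) < 1 := by
    rw [← ENNReal.ofReal_one]
    exact ENNReal.ofReal_lt_ofReal_iff one_pos |>.2 (by linarith)
  have hev : ∀ᶠ r in nhdsWithin 0 (Ioi 0),
      ENNReal.ofReal (1 - ε) < volume (E ∩ Ioo (ℓ - r) (ℓ + r)) / ENNReal.ofReal (2 * r) :=
    hdens.eventually (eventually_gt_nhds h1)
  have hev2 : ∀ᶠ r : ℝ in nhdsWithin 0 (Ioi 0), r < ℓ :=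
    eventually_nhdsWithin_of_eventually_nhds (eventually_lt_nhds hℓ)
  obtain ⟨r₀, hr₀pos, hr₀⟩ := mem_nhdsGT_iff_exists_Ioc_subset.1 (hev.and hev2)
  simp only [mem_Ioi] at hr₀pos
  have hr₀ℓ : r₀ < ℓ := (hr₀ ⟨hr₀pos, le_refl r₀⟩).2
  -- key lemma: for 0 < r ≤ r₀, the measure of E on (ℓ - r, ℓ - q r) is at least r(1-q)/3
  have key : ∀ r : ℝ, 0 < r → r ≤ r₀ →
      (volume (E ∩ Ioo (ℓ - r) (ℓ - q * r))).toReal ≥ r * (1 - q) / 3 := by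
    intro r hr hrr₀
    have hrat := (hr₀ ⟨hr, hrr₀⟩).1
    have h2r : (0:ℝ) < 2 * r := by linarith
    have hne : ENNReal.ofReal (2 * r) ≠ 0 := by
      simp [ENNReal.ofReal_eq_zero]; linarith
    have hmul : ENNReal.ofReal (1 - ε) * ENNReal.ofReal (2 * r)
        < volume (E ∩ Ioo (ℓ - r) (ℓ + r)) :=
      (ENNReal.lt_div_iff_mul_lt (Or.inl hne) (Or.inl ENNReal.ofReal_ne_top)).1 hrat
    have hlow : ENNReal.ofReal ((1 - ε) * (2 * r)) ≤ volume (E ∩ Ioo (ℓ - r) (ℓ + r)) := by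
      rw [ENNReal.ofReal_mul (by linarith : (0:ℝ) ≤ 1 - ε)]
      exact hmul.le
    have hsplit : volume (E ∩ Ioo (ℓ - r) (ℓ + r))
        ≤ volume (E ∩ Ioo (ℓ - r) (ℓ - q * r)) + ENNReal.ofReal (r * (1 + q)) := by
      calc volume (E ∩ Ioo (ℓ - r) (ℓ + r))
          ≤ volume ((E ∩ Ioo (ℓ - r) (ℓ - q * r)) ∪ Ico (ℓ - q * r) (ℓ + r)) := by
            apply measure_mono
            rintro x ⟨hxE, hx1, hx2⟩
            rcases lt_or_ge x (ℓ - q * r) with h | h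
            · exact Or.inl ⟨hxE, hx1, h⟩
            · exact Or.inr ⟨h, hx2⟩
        _ ≤ volume (E ∩ Ioo (ℓ - r) (ℓ - q * r)) + volume (Ico (ℓ - q * r) (ℓ + r)) :=
            measure_union_le _ _
        _ = volume (E ∩ Ioo (ℓ - r) (ℓ - q * r)) + ENNReal.ofReal (r * (1 + q)) := by
            rw [Real.volume_Ico]; ring_nf
    have htarget : ENNReal.ofReal (r * (1 - q) / 3) ≤ volume (E ∩ Ioo (ℓ - r) (ℓ - q * r)) := by
      have heq : (1 - ε) * (2 * r) - r * (1 + q) = r * (1 - q) / 3 := by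
        simp only [hεdef]; ring
      have h := tsub_le_iff_right.2 (hlow.trans hsplit)
      rwa [← ENNReal.ofReal_sub _ (by nlinarith : (0:ℝ) ≤ r * (1 + q)), heq] at h
    have hfin : volume (E ∩ Ioo (ℓ - r) (ℓ - q * r)) ≠ ⊤ := by
      refine ne_top_of_le_ne_top ?_ (measure_mono (inter_subset_right))
      rw [Real.volume_Ioo]; exact ENNReal.ofReal_ne_top
    calc (volume (E ∩ Ioo (ℓ - r) (ℓ - q * r))).toReal
        ≥ (ENNReal.ofReal (r * (1 - q) / 3)).toReal :=
          ENNReal.toReal_mono hfin htarget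
      _ = r * (1 - q) / 3 := ENNReal.toReal_ofReal (by nlinarith)
  refine ⟨fun n => ℓ - r₀ * q ^ n, ?_, ?_, ?_, ?_, ?_⟩
  · apply strictMono_nat_of_lt_succ
    intro n
    have : q ^ (n + 1) < q ^ n := pow_lt_pow_right_of_lt_one₀ hq0 hq1 (Nat.lt_succ_self n)
    nlinarith [pow_pos hq0 n]
  · intro n
    have h1 : q ^ n ≤ 1 := pow_le_one₀ hq0.le hq1.le
    have h2 : 0 < q ^ n := pow_pos hq0 n
    constructor
    · show (0:ℝ) < ℓ - r₀ * q ^ n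
      nlinarith
    · show ℓ - r₀ * q ^ n < ℓ
      nlinarith
  · have : Tendsto (fun n : ℕ => q ^ n) atTop (nhds 0) :=
      tendsto_pow_atTop_nhds_zero_of_lt_one hq0.le hq1
    have := this.const_mul r₀
    have h := (tendsto_const_nhds (x := ℓ) (f := atTop)).sub this
    simpa using h
  · intro n
    ring
  · intro n
    have hr : 0 < r₀ * q ^ n := by positivity
    have hrr₀ : r₀ * q ^ n ≤ r₀ := by
      have h1 : q ^ n ≤ 1 := pow_le_one₀ hq0.le hq1.le
      nlinarith
    have h := key _ hr hrr₀
    have e1 : ℓ - q * (r₀ * q ^ n) = ℓ - r₀ * q ^ (n + 1) := by ring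
    rw [e1] at h
    show (volume (E ∩ Ioo (ℓ - r₀ * q ^ n) (ℓ - r₀ * q ^ (n + 1)))).toReal
      ≥ ((ℓ - r₀ * q ^ (n + 1)) - (ℓ - r₀ * q ^ n)) / 3
    have e2 : (ℓ - r₀ * q ^ (n + 1)) - (ℓ - r₀ * q ^ n) = r₀ * q ^ n * (1 - q) := by ring
    rw [e2]
    exact h
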